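/- arXiv:2004.04982 — 4 statements merged into one kernel-verified Lean document; each statement's English description precedes it below -/
import Mathlib

section
/- For the loop polynomial w = x1^{a1}x2 + x2^{a2}x3 + ... + x_{n-1}^{a_{n-1}}x_n + x_n^{a_n}x1, the group G_w = {(t1,...,tn) in (C*)^n : w(t1 x1, ..., tn xn) = w(x1,...,xn)} is a cyclic group of order a1*a2*...*an + (-1)^{n+1}. -/
/-!
The relations `t (i + 1) = (t i ^ a i)⁻¹` determine `t` from `t 0`: `t k = t 0 ^ c k` with
`c k = (-1) ^ k * a 0 * ⋯ * a (k - 1)`, and going once around the loop forces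
`t 0 ^ (c n - 1) = 1`. Conversely every such `t 0` extends to a symmetry, so `G_w` is isomorphic
to the group of `N`-th roots of unity in `ℂ`, where
`N = |c n - 1| = a 0 * ⋯ * a (n - 1) + (-1) ^ (n + 1)`.
-/

open Fin.NatCast

section LoopSymmetry

variable (G : Type*) [CommGroup G] {n : ℕ} [NeZero n] (a : Fin n → ℕ)

def loopSymmetrySubgroup : Subgroup (Fin n → G) where
  carrier := {t | ∀ i, t i ^ a i * t (i + 1) = 1}
  mul_mem' {s t} hs ht i := by
    rw [Pi.mul_apply, Pi.mul_apply, mul_pow, mul_mul_mul_comm, hs i, ht i, mul_one]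
  one_mem' i := by simp
  inv_mem' {t} ht i := by simp only [Pi.inv_apply, inv_pow, ← mul_inv, ht i, inv_one]

variable {G a}

theorem mem_loopSymmetrySubgroup {t : Fin n → G} :
    t ∈ loopSymmetrySubgroup G a ↔ ∀ i, t i ^ a i * t (i + 1) = 1 :=
  Iff.rfl

variable (a) in
def loopExponent (k : ℕ) : ℤ := (-1) ^ k * ∏ i ∈ Finset.range k, (a i : ℤ)

theorem loopExponent_zero : loopExponent a 0 = 1 := by simp [loopExponent]

theorem loopExponent_succ (k : ℕ) : loopExponent a (k + 1) = -(a k * loopExponent a k) := by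
  simp only [loopExponent, pow_succ, Finset.prod_range_succ]
  ring

theorem loopExponent_add_period (k : ℕ) :
    loopExponent a (n + k) = loopExponent a n * loopExponent a k := by
  simp only [loopExponent, Finset.prod_range_add, pow_add, Nat.cast_add, Fin.natCast_self,
    zero_add]
  ring

theorem apply_eq_zpow_loopExponent {t : Fin n → G} (ht : t ∈ loopSymmetrySubgroup G a)
    (k : ℕ) :
    t k = t 0 ^ loopExponent a k := by
  induction k with
  | zero => simp [loopExponent_zero]
  | succ k ih =>
    have hstep : t (k + 1) = (t k ^ a k)⁻¹ :=
      eq_inv_of_mul_eq_one_right (mem_loopSymmetrySubgroup.mp ht k)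
    rw [Nat.cast_succ, hstep, ih, loopExponent_succ, ← zpow_natCast, ← zpow_mul, ← zpow_neg,
      mul_comm]

theorem zpow_loopExponent_sub_one_eq_one {t : Fin n → G} (ht : t ∈ loopSymmetrySubgroup G a) :
    t 0 ^ (loopExponent a n - 1) = 1 := by
  have hloop := apply_eq_zpow_loopExponent ht n
  rw [Fin.natCast_self] at hloop
  rw [zpow_sub_one, ← hloop, mul_inv_cancel]

theorem periodic_zpow_loopExponent {z : G} (hz : z ^ (loopExponent a n - 1) = 1) :
    Function.Periodic (fun k ↦ z ^ loopExponent a k) n := by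
  have hzn : z ^ loopExponent a n = z := mul_inv_eq_one.mp (by rwa [← zpow_sub_one])
  intro k
  dsimp only
  rw [add_comm, loopExponent_add_period, zpow_mul, hzn]

theorem zpow_loopExponent_mem {z : G} (hz : z ^ (loopExponent a n - 1) = 1) :
    (fun i : Fin n ↦ z ^ loopExponent a i) ∈ loopSymmetrySubgroup G a := by
  refine mem_loopSymmetrySubgroup.mpr fun i ↦ ?_
  have hval : ((i + 1 : Fin n) : ℕ) = (i + 1) % n := by
    rw [Fin.val_add, Fin.val_one', Nat.add_mod_mod]
  rw [hval, (periodic_zpow_loopExponent hz).map_mod_nat, ← zpow_natCast, ← zpow_mul,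
    ← zpow_add, loopExponent_succ, Fin.cast_val_eq_self, mul_comm (loopExponent a i),
    add_neg_cancel, zpow_zero]

variable (G a) in
def loopSymmetrySubgroupEquivKer :
    loopSymmetrySubgroup G a ≃* (zpowGroupHom (loopExponent a n - 1) : G →* G).ker where
  toFun t := ⟨t.1 0, zpow_loopExponent_sub_one_eq_one t.2⟩
  invFun z := ⟨_, zpow_loopExponent_mem z.2⟩
  left_inv t := by
    ext i
    simpa using (apply_eq_zpow_loopExponent t.2 i).symm
  right_inv z := by
    ext
    simp [loopExponent_zero]
  map_mul' _ _ := rfl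

theorem natAbs_loopExponent_sub_one (hP : 0 < ∏ i, (a i : ℤ)) :
    ((loopExponent a n - 1).natAbs : ℤ) = ∏ i, (a i : ℤ) + (-1) ^ (n + 1) := by
  have hprod : ∏ i ∈ Finset.range n, (a i : ℤ) = ∏ i, (a i : ℤ) := by
    simp [← Fin.prod_univ_eq_prod_range]
  have hfactor : loopExponent a n - 1 = (-1) ^ n * (∏ i, (a i : ℤ) + (-1) ^ (n + 1)) := by
    rw [loopExponent, hprod, mul_add, pow_succ, ← mul_assoc, pow_mul_pow_eq_one n rfl]
    ring
  rw [hfactor, Int.natCast_natAbs, abs_mul, abs_pow, abs_neg, abs_one, one_pow, one_mul,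
    abs_of_nonneg]
  rcases neg_one_pow_eq_or ℤ (n + 1) with h | h <;> rw [h] <;> omega

end LoopSymmetry

/-- For the loop polynomial `w = x1^{a1}x2 + ⋯ + x_n^{a_n}x1` (with `n ≥ 2`, `a i ≥ 2`),
the group of diagonal symmetries
`G_w = {t ∈ (ℂ*)^n | t_i^{a_i} t_{i+1} = 1 for all i (cyclically)}`
is cyclic of order `a1⋯an + (-1)^{n+1}`.  (We write `n = m + 2` to encode `n ≥ 2`.) -/
theorem loop_diagonal_symmetry_group_cyclic (m : ℕ) (a : Fin (m + 2) → ℕ)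
    (ha : ∀ i, 2 ≤ a i) :
    ∃ H : Subgroup (Fin (m + 2) → ℂˣ),
      (H : Set (Fin (m + 2) → ℂˣ)) = {t | ∀ i : Fin (m + 2), t i ^ a i * t (i + 1) = 1} ∧
      IsCyclic H ∧
      (Nat.card H : ℤ) = (∏ i : Fin (m + 2), (a i : ℤ)) + (-1) ^ ((m + 2) + 1) := by
  have hP : 2 ≤ ∏ i, (a i : ℤ) := by
    have h0 : a 0 ≤ ∏ i, a i :=
      Finset.single_le_prod' (fun i _ ↦ by linarith [ha i]) (Finset.mem_univ 0)
    exact_mod_cast (ha 0).trans h0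
  set N := (loopExponent a (m + 2) - 1).natAbs
  have hN : (N : ℤ) = ∏ i, (a i : ℤ) + (-1) ^ (m + 2 + 1) :=
    natAbs_loopExponent_sub_one (by omega)
  have : NeZero N := ⟨by rcases neg_one_pow_eq_or ℤ (m + 2 + 1) with h | h <;> omega⟩
  let e := (loopSymmetrySubgroupEquivKer ℂˣ a).trans
    (MulEquiv.subgroupCongr ker_zpowGroupHom_eq_rootsOfUnity)
  refine ⟨loopSymmetrySubgroup ℂˣ a, rfl, e.isCyclic.mpr inferInstance, ?_⟩
  rw [Nat.card_congr e.toEquiv, Complex.card_rootsOfUnity, hN]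
end

section
/- Let ζ be a primitive 33rd root of unity in C and w = x1^2*x2 + x2^2*x3 + x3^2*x4 + x4^2*x5 + x5^2*x1. Then the element g = (ζ, ζ^{-2}, ζ^{4}, ζ^{-8}, ζ^{16}) belongs to G_w = {(t1,...,t5) in (C*)^5 : t_i^2 t_{i+1} = 1 for all i (indices mod 5)} and generates it; in particular G_w is cyclic of order 33. -/
/-!
Going round the cycle, `t (i + 1) = (t i ^ 2)⁻¹` forces `t i = t 0 ^ (-2) ^ i`, and closing the
cycle forces `t 0 ^ (1 + 2 ^ 5) = 1`. Hence `t ↦ t 0` identifies `G_w` with the 33rd roots of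
unity, and `g` is the preimage of the generator `ζ`.
-/

namespace CyclicPowerRelations

variable {G : Type*} [Group G] {n a : ℕ}

theorem apply_eq_apply_zero_zpow {t : Fin (n + 1) → G} (ht : ∀ i, t i ^ a * t (i + 1) = 1)
    (i : Fin (n + 1)) : t i = t 0 ^ (-(a : ℤ)) ^ (i : ℕ) := by
  induction i using Fin.induction with
  | zero => simp
  | succ i ih =>
    have hi := ht i.castSucc
    rw [Fin.coeSucc_eq_succ] at hi
    rw [eq_inv_of_mul_eq_one_right hi, ih, ← zpow_natCast, ← zpow_mul, ← zpow_neg,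
      Fin.val_succ, Fin.val_castSucc, pow_succ]
    congr 1
    ring

theorem apply_zero_zpow_one_sub_pow_eq_one {t : Fin (n + 1) → G}
    (ht : ∀ i, t i ^ a * t (i + 1) = 1) : t 0 ^ (1 - (-(a : ℤ)) ^ (n + 1)) = 1 := by
  have hlast := ht (Fin.last n)
  rw [Fin.last_add_one, apply_eq_apply_zero_zpow ht (Fin.last n), Fin.val_last, ← zpow_natCast,
    ← zpow_mul, ← zpow_add_one] at hlast
  rw [← hlast]
  congr 1
  ring

theorem pow_mul_succ_eq_one_of_zpow_eq_one {x : G} (hx : x ^ (1 - (-(a : ℤ)) ^ (n + 1)) = 1)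
    (i : Fin (n + 1)) :
    (x ^ (-(a : ℤ)) ^ (i : ℕ)) ^ a * x ^ (-(a : ℤ)) ^ ((i + 1 : Fin (n + 1)) : ℕ) = 1 := by
  rw [← zpow_natCast, ← zpow_mul, ← zpow_add]
  induction i using Fin.lastCases with
  | last =>
    rw [Fin.last_add_one, Fin.val_last, Fin.val_zero, ← hx]
    congr 1
    ring
  | cast i =>
    rw [Fin.coeSucc_eq_succ, Fin.val_succ, Fin.val_castSucc, ← zpow_zero x]
    congr 1
    ring

theorem orderOf_eq_orderOf_apply_zero {t : Fin (n + 1) → G}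
    (ht : ∀ i, t i ^ a * t (i + 1) = 1) : orderOf t = orderOf (t 0) := by
  refine orderOf_eq_orderOf_iff.mpr fun m => ⟨fun h => congrFun h 0, fun h => ?_⟩
  funext i
  rw [Pi.pow_apply, apply_eq_apply_zero_zpow ht i, ← zpow_natCast, ← zpow_mul, mul_comm,
    zpow_mul, zpow_natCast, h, one_zpow, Pi.one_apply]

theorem eq_zpow_of_apply_zero_eq_zpow {s t : Fin (n + 1) → G}
    (hs : ∀ i, s i ^ a * s (i + 1) = 1) (ht : ∀ i, t i ^ a * t (i + 1) = 1) {k : ℤ}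
    (h : t 0 = s 0 ^ k) : t = s ^ k := by
  funext i
  rw [apply_eq_apply_zero_zpow ht i, h, Pi.pow_apply, apply_eq_apply_zero_zpow hs i,
    ← zpow_mul, ← zpow_mul, mul_comm]

end CyclicPowerRelations

open CyclicPowerRelations in
/-- For `w = x1²x2 + x2²x3 + x3²x4 + x4²x5 + x5²x1` and `ζ` a primitive 33rd root of
unity, the element `g = (ζ, ζ⁻², ζ⁴, ζ⁻⁸, ζ¹⁶)` lies in the diagonal symmetry group
`G_w = {t ∈ (ℂ*)^5 | t_i² t_{i+1} = 1 (indices mod 5)}`, generates it, and has order 33;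
in particular `G_w` is cyclic of order 33. -/
theorem gw_cyclic_of_order_33 (ζ : ℂˣ) (hζ : IsPrimitiveRoot ζ 33)
    (g : Fin 5 → ℂˣ)
    (hg : g = ![ζ, ζ ^ (-2 : ℤ), ζ ^ (4 : ℤ), ζ ^ (-8 : ℤ), ζ ^ (16 : ℤ)]) :
    (∀ i : Fin 5, g i ^ 2 * g (i + 1) = 1) ∧
    (∀ t : Fin 5 → ℂˣ, (∀ i : Fin 5, t i ^ 2 * t (i + 1) = 1) → ∃ k : ℤ, t = g ^ k) ∧
    orderOf g = 33 := by
  have hg_pow : g = fun i : Fin 5 => ζ ^ (-((2 : ℕ) : ℤ)) ^ (i : ℕ) := by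
    subst hg
    funext i
    fin_cases i <;> norm_num
  have hζ33 : ζ ^ (1 - (-((2 : ℕ) : ℤ)) ^ 5) = 1 := by
    rw [show 1 - (-((2 : ℕ) : ℤ)) ^ 5 = (33 : ℕ) by norm_num, zpow_natCast]
    exact hζ.pow_eq_one
  have hg_rel : ∀ i : Fin 5, g i ^ 2 * g (i + 1) = 1 := by
    rw [hg_pow]
    exact pow_mul_succ_eq_one_of_zpow_eq_one hζ33
  have hg_zero : g 0 = ζ := by simp [hg]
  refine ⟨hg_rel, fun t ht => ?_, ?_⟩
  · have ht_zero : t 0 ∈ Subgroup.zpowers ζ := by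
      rw [hζ.zpowers_eq, mem_rootsOfUnity]
      exact_mod_cast apply_zero_zpow_one_sub_pow_eq_one ht
    obtain ⟨k, hk⟩ := ht_zero
    exact ⟨k, eq_zpow_of_apply_zero_eq_zpow hg_rel ht (by rw [hg_zero]; exact hk.symm)⟩
  · rw [orderOf_eq_orderOf_apply_zero hg_rel, hg_zero, hζ.eq_orderOf]
end

section
/- Let S ⊆ Z × Z/11 be a finite set such that: (i) S contains no quadruple {(a,b),(a,b'),(a+2,b),(a+2,b')} with b ≠ b'; (ii) after translating so that min{a : (a,b) ∈ S for some b} = 0 and (0,0) ∈ S, S ⊆ {0,1,2,3} × Z/11 ∪ {(4,0)}; and (iii) S does not contain both (0,0), (2,0), and (4,0), and if (4,0) ∈ S then (0,b) ∉ S for b ≠ 0. Then |S| ≤ 24. -/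
/-- The combinatorial core of the bound on exceptional collections of line bundles:
a finite set `S ⊆ ℤ × ZMod 11` containing `(0,0)`, with all first coordinates in
`{0,1,2,3}` except possibly the element `(4,0)`, containing no quadruple
`{(a,b),(a,b'),(a+2,b),(a+2,b')}` with `b ≠ b'`, not containing all of
`(0,0),(2,0),(4,0)`, and such that `(4,0) ∈ S` forbids `(0,b) ∈ S` for `b ≠ 0`,
has at most 24 elements. -/
theorem exceptional_collection_bound (S : Finset (ℤ × ZMod 11))
    (h0 : ((0 : ℤ), (0 : ZMod 11)) ∈ S)
    (hmin : ∀ p ∈ S, 0 ≤ p.1)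
    (hrange : ∀ p ∈ S, p.1 ∈ ({0, 1, 2, 3} : Set ℤ) ∨ p = (4, 0))
    (hquad : ∀ (a : ℤ) (b b' : ZMod 11), b ≠ b' →
      ¬((a, b) ∈ S ∧ (a, b') ∈ S ∧ (a + 2, b) ∈ S ∧ (a + 2, b') ∈ S))
    (hloop : ¬(((0 : ℤ), (0 : ZMod 11)) ∈ S ∧ ((2 : ℤ), (0 : ZMod 11)) ∈ S ∧
      ((4 : ℤ), (0 : ZMod 11)) ∈ S))
    (h40 : ((4 : ℤ), (0 : ZMod 11)) ∈ S → ∀ b : ZMod 11, b ≠ 0 → ((0 : ℤ), b) ∉ S) :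
    S.card ≤ 24 := by
  classical
  set col : ℤ → Finset (ZMod 11) := fun a => (S.filter fun p => p.1 = a).image Prod.snd
    with hcoldef
  have hmem : ∀ a b, b ∈ col a ↔ (a, b) ∈ S := by
    intro a b
    simp only [hcoldef, Finset.mem_image, Finset.mem_filter]
    constructor
    · rintro ⟨⟨x, y⟩, ⟨hS, hx⟩, rfl⟩
      simp only at hx
      subst hx; exact hS
    · intro h; exact ⟨(a, b), ⟨h, rfl⟩, rfl⟩
  have hcard : ∀ a, (S.filter fun p => p.1 = a).card = (col a).card := by
    intro a
    refine (Finset.card_image_of_injOn ?_).symm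
    intro p hp q hq hpq
    simp only [Finset.coe_filter, Set.mem_setOf_eq] at hp hq
    exact Prod.ext (hp.2.trans hq.2.symm) hpq
  have hinter : ∀ a, (col a ∩ col (a + 2)).card ≤ 1 := by
    intro a
    by_contra h
    push_neg at h
    obtain ⟨b, hb, b', hb', hne⟩ := Finset.one_lt_card.mp h
    simp only [Finset.mem_inter, hmem] at hb hb'
    exact hquad a b b' hne ⟨hb.1, hb'.1, hb.2, hb'.2⟩
  have hpair : ∀ a, (col a).card + (col (a + 2)).card ≤ 12 := by
    intro a
    have h1 := Finset.card_union_add_card_inter (col a) (col (a + 2))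
    have h2 : (col a ∪ col (a + 2)).card ≤ 11 := by
      simpa using Finset.card_le_univ (col a ∪ col (a + 2))
    have h3 := hinter a
    omega
  have hfib : S.card = ∑ a ∈ ({0, 1, 2, 3, 4} : Finset ℤ),
      (S.filter fun p => p.1 = a).card := by
    apply Finset.card_eq_sum_card_fiberwise
    intro p hp
    rcases hrange p hp with h | h
    · simp only [Set.mem_insert_iff, Set.mem_singleton_iff] at h
      simp only [Finset.mem_coe, Finset.mem_insert, Finset.mem_singleton]
      tauto
    · simp [h]
  have hsum : S.card = (col 0).card + (col 1).card + (col 2).card + (col 3).card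
      + (S.filter fun p => p.1 = 4).card := by
    rw [hfib]
    rw [show ({0, 1, 2, 3, 4} : Finset ℤ) = insert 0 (insert 1 (insert 2 (insert 3 {4})))
      from rfl]
    rw [Finset.sum_insert (by decide), Finset.sum_insert (by decide),
      Finset.sum_insert (by decide), Finset.sum_insert (by decide),
      Finset.sum_singleton, hcard 0, hcard 1, hcard 2, hcard 3]
    ring
  have h4sub : (S.filter fun p => p.1 = 4) ⊆ {((4 : ℤ), (0 : ZMod 11))} := by
    intro p hp
    simp only [Finset.mem_filter] at hp
    rcases hrange p hp.1 with h | h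
    · exfalso
      simp only [Set.mem_insert_iff, Set.mem_singleton_iff] at h
      have hp2 := hp.2
      omega
    · simp only [Finset.mem_singleton]
      exact h
  have h4card : (S.filter fun p => p.1 = 4).card ≤ 1 := by
    simpa using Finset.card_le_card h4sub
  have h02 := hpair 0
  have h13 := hpair 1
  norm_num at h02 h13
  by_cases h4 : ((4 : ℤ), (0 : ZMod 11)) ∈ S
  · have hc0 : (col 0).card ≤ 1 := by
      have : col 0 ⊆ {0} := by
        intro b hb
        rw [hmem] at hb
        simp only [Finset.mem_singleton]
        by_contra hne
        exact h40 h4 b hne hb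
      simpa using Finset.card_le_card this
    have hc2 : (col 2).card ≤ 10 := by
      have h0n : (0 : ZMod 11) ∉ col 2 := by
        rw [hmem]
        intro h2
        exact hloop ⟨h0, h2, h4⟩
      have hsub : col 2 ⊆ Finset.univ.erase (0 : ZMod 11) := by
        intro b hb
        exact Finset.mem_erase.mpr ⟨fun he => h0n (he ▸ hb), Finset.mem_univ _⟩
      have := Finset.card_le_card hsub
      simpa [Finset.card_erase_of_mem] using this
    omega
  · have h4z : (S.filter fun p => p.1 = 4).card = 0 := by
      rw [Finset.card_eq_zero]
      rw [Finset.eq_empty_iff_forall_notMem]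
      intro p hp
      have := h4sub hp
      simp only [Finset.mem_singleton] at this
      subst this
      exact h4 (Finset.mem_filter.mp hp).1
    omega
end

section
/- For w = x1^2 x2 + x2^2 x3 + x3^2 x4 + x4^2 x5 + x5^2 x1, the map w: C^5 → C has a unique critical point at the origin; i.e., if all partial derivatives ∂w/∂x_i vanish at a point p ∈ C^5, then p = 0. -/
/-- Quasi-smoothness of `w = x1²x2 + x2²x3 + x3²x4 + x4²x5 + x5²x1`: the only common
zero of the partial derivatives `∂w/∂x_i = 2 x_i x_{i+1} + x_{i-1}²` is the origin. -/
theorem w_quasi_smooth (x : Fin 5 → ℂ)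
    (h : ∀ i : Fin 5, 2 * x i * x (i + 1) + x (i - 1) ^ 2 = 0) :
    x = 0 := by
  have h0 : 2 * x 0 * x 1 + x 4 ^ 2 = 0 := h 0
  have h1 : 2 * x 1 * x 2 + x 0 ^ 2 = 0 := h 1
  have h2 : 2 * x 2 * x 3 + x 1 ^ 2 = 0 := h 2
  have h3 : 2 * x 3 * x 4 + x 2 ^ 2 = 0 := h 3
  have h4 : 2 * x 4 * x 0 + x 3 ^ 2 = 0 := h 4
  have key : 33 * x 0 ^ 4 = 0 := by
    linear_combination (33 * x 0 ^ 2 - 2 * x 1 * x 2) * h1 + 4 * x 2 ^ 2 * h2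
      - 8 * x 2 * x 3 * h3 + 16 * x 2 * x 4 * h4 - 32 * x 0 * x 2 * h0
  have hx0 : x 0 = 0 := by
    have : x 0 ^ 4 = 0 := by linear_combination (1/33 : ℂ) * key
    exact pow_eq_zero_iff (n := 4) (by norm_num) |>.mp this
  have hx4 : x 4 = 0 := by
    have : x 4 ^ 2 = 0 := by linear_combination h0 - 2 * x 1 * hx0
    exact pow_eq_zero_iff (n := 2) (by norm_num) |>.mp this
  have hx3 : x 3 = 0 := by
    have : x 3 ^ 2 = 0 := by linear_combination h4 - 2 * x 0 * hx4
    exact pow_eq_zero_iff (n := 2) (by norm_num) |>.mp this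
  have hx2 : x 2 = 0 := by
    have : x 2 ^ 2 = 0 := by linear_combination h3 - 2 * x 4 * hx3
    exact pow_eq_zero_iff (n := 2) (by norm_num) |>.mp this
  have hx1 : x 1 = 0 := by
    have : x 1 ^ 2 = 0 := by linear_combination h2 - 2 * x 3 * hx2
    exact pow_eq_zero_iff (n := 2) (by norm_num) |>.mp this
  funext i
  fin_cases i <;> simp [hx0, hx1, hx2, hx3, hx4]
end
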